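/- arXiv:2402.02882 — 2 statements merged into one kernel-verified Lean document; each statement's English description precedes it below -/
import Mathlib

section
/- Let f : [0,T] → ℝ₊ be an integrable function and let A ⊂ [0,T] have Lebesgue measure zero. For every ε > 0 there exists a finite partition 0 = t₀ < t₁ < ⋯ < t_{n+1} = T with all points t₁,…,t_n lying outside A, with mesh size t_{i+1} − t_i ≤ ε for all i, and such that the left Riemann sum satisfies |Σ_{i=1}^n f(t_i)(t_{i+1} − t_i) − ∫₀^T f(x) dx| ≤ ε. -/
open MeasureTheory Filter Topology Set

set_option maxHeartbeats 2000000 in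
/-- Existence of a partition with points outside a null set `A`, with mesh at most `ε`,
whose left Riemann sum approximates the integral of `f` up to `ε`. -/
theorem exists_partition_riemann_sum_approx
    (T : ℝ) (hT : 0 < T) (f : ℝ → ℝ) (hf : IntegrableOn f (Set.Icc 0 T))
    (hfnn : ∀ x ∈ Set.Icc (0:ℝ) T, 0 ≤ f x)
    (A : Set ℝ) (hA : MeasureTheory.volume A = 0) (ε : ℝ) (hε : 0 < ε) :
    ∃ (n : ℕ) (t : ℕ → ℝ), t 0 = 0 ∧ t (n + 1) = T ∧
      (∀ i ≤ n, t i < t (i + 1)) ∧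
      (∀ i, 1 ≤ i → i ≤ n → t i ∉ A) ∧
      (∀ i ≤ n, t (i + 1) - t i ≤ ε) ∧
      |(∑ i ∈ Finset.Icc 1 n, f (t i) * (t (i + 1) - t i)) - ∫ x in (0:ℝ)..T, f x| ≤ ε := by
  classical
  -- extension of `f` by zero
  obtain ⟨f₀, hf₀eq, hf₀zero, hf₀int, hf₀nn⟩ :
      ∃ f₀ : ℝ → ℝ, (∀ x ∈ Set.Icc (0:ℝ) T, f₀ x = f x) ∧
        (∀ x, x ∉ Set.Icc (0:ℝ) T → f₀ x = 0) ∧ Integrable f₀ ∧ ∀ x, 0 ≤ f₀ x := by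
    refine ⟨(Set.Icc (0:ℝ) T).indicator f, fun x hx => Set.indicator_of_mem hx f,
      fun x hx => Set.indicator_of_notMem hx f,
      (integrable_indicator_iff measurableSet_Icc).2 hf, fun x => ?_⟩
    by_cases hx : x ∈ Set.Icc (0:ℝ) T
    · simpa [Set.indicator_of_mem hx] using hfnn x hx
    · simp [Set.indicator_of_notMem hx]
  have hf₀ii : ∀ a c : ℝ, IntervalIntegrable f₀ volume a c := fun a c =>
    hf₀int.intervalIntegrable
  have hI : (∫ x in (0:ℝ)..T, f x) = ∫ x in (0:ℝ)..T, f₀ x := by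
    apply intervalIntegral.integral_congr
    intro x hx
    rw [Set.uIcc_of_le hT.le] at hx
    exact (hf₀eq x hx).symm
  -- continuous compactly supported approximation
  obtain ⟨g, gsupp, hgL1, gcont, gint⟩ :=
    hf₀int.exists_hasCompactSupport_integral_sub_le (show (0:ℝ) < ε/8 by positivity)
  set b : ℝ → ℝ := fun x => f₀ x - g x with hbdef
  have hbint : Integrable b := hf₀int.sub gint
  have hbii : ∀ a c : ℝ, IntervalIntegrable b volume a c := fun a c =>
    hbint.intervalIntegrable
  have hbaii : ∀ a c : ℝ, IntervalIntegrable (fun x => |b x|) volume a c := fun a c =>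
    hbint.abs.intervalIntegrable
  have hbL1 : (∫ x, |b x|) ≤ ε/8 := by
    simpa [Real.norm_eq_abs] using hgL1
  -- any interval integral of |b| is at most ε/8
  have habs : ∀ a c : ℝ, a ≤ c → (∫ x in a..c, |b x|) ≤ ε/8 := by
    intro a c hac
    rw [intervalIntegral.integral_of_le hac]
    calc (∫ x in Set.Ioc a c, |b x|) ≤ ∫ x, |b x| :=
          setIntegral_le_integral hbint.abs (Eventually.of_forall fun x => abs_nonneg _)
      _ ≤ ε/8 := hbL1
  -- uniform continuity of g
  set η : ℝ := ε / (8 * (T + 1)) with hηdef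
  have hη : 0 < η := by positivity
  obtain ⟨d, hd, hgd⟩ := Metric.uniformContinuous_iff.mp
    (gsupp.uniformContinuous_of_continuous gcont) η hη
  -- continuity of the primitive of f₀
  have hPcont : Continuous (fun x => ∫ u in (0:ℝ)..x, f₀ u) :=
    intervalIntegral.continuous_primitive (fun a c => hf₀ii a c) 0
  obtain ⟨h₀, hh₀, hPsmall⟩ := Metric.continuousAt_iff.mp (hPcont.continuousAt (x := 0))
    (ε/8) (by positivity)
  obtain ⟨h₁, hh₁, hPT⟩ := Metric.continuousAt_iff.mp (hPcont.continuousAt (x := T))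
    (ε/8) (by positivity)
  -- choose the number of subintervals
  set r : ℝ := min (min ε d) (min h₀ h₁) with hrdef
  have hr : 0 < r := lt_min (lt_min hε hd) (lt_min hh₀ hh₁)
  obtain ⟨m, hm⟩ := exists_nat_gt (T / r)
  have hm0 : m ≠ 0 := by
    rintro rfl
    have := div_pos hT hr
    simp only [Nat.cast_zero] at hm
    linarith
  obtain ⟨k, rfl⟩ := Nat.exists_eq_succ_of_ne_zero hm0
  set h : ℝ := T / ((k:ℝ) + 1) with hhdef
  have hM : (0:ℝ) < (k:ℝ) + 1 := by positivity
  have hh : 0 < h := div_pos hT hM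
  have hkh : ((k:ℝ) + 1) * h = T := by
    rw [hhdef]; field_simp
  have hhr : h < r := by
    rw [hhdef, div_lt_iff₀ hM]
    have hm' : T / r < (k:ℝ) + 1 := by
      have : ((k + 1 : ℕ) : ℝ) = (k:ℝ) + 1 := by push_cast; ring
      rw [← this]; exact_mod_cast hm
    calc T = (T / r) * r := by field_simp
      _ < ((k:ℝ) + 1) * r := mul_lt_mul_of_pos_right hm' hr
      _ = r * ((k:ℝ) + 1) := by ring
  have hhε : h ≤ ε := le_of_lt (lt_of_lt_of_le hhr ((min_le_left _ _).trans (min_le_left _ _)))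
  have hhd : h < d := lt_of_lt_of_le hhr ((min_le_left _ _).trans (min_le_right _ _))
  have hhh₀ : h < h₀ := lt_of_lt_of_le hhr ((min_le_right _ _).trans (min_le_left _ _))
  have hhh₁ : h < h₁ := lt_of_lt_of_le hhr ((min_le_right _ _).trans (min_le_right _ _))
  have hkhT : (k:ℝ) * h = T - h := by linarith [hkh]
  -- β : the integral of f₀ over the last block is small
  have hβ : (∫ x in ((k:ℝ)*h)..T, f₀ x) ≤ ε/8 := by
    have hsplit := intervalIntegral.integral_add_adjacent_intervals
      (a := (0:ℝ)) (b := (k:ℝ)*h) (c := T) (hf₀ii _ _) (hf₀ii _ _)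
    have hdist : dist ((k:ℝ)*h) T < h₁ := by
      rw [Real.dist_eq, hkhT]
      rw [show T - h - T = -h by ring, abs_neg, abs_of_nonneg hh.le]
      exact hhh₁
    have := hPT hdist
    rw [Real.dist_eq] at this
    have h2 := (abs_lt.mp this).1
    linarith
  -- translated integrable functions
  have htrans : ∀ (u : ℝ → ℝ), Integrable u volume → ∀ c : ℝ,
      Integrable (fun x : ℝ => u (x + c)) volume := by
    intro u hu c
    exact ((measurePreserving_add_right volume c).integrable_comp
      hu.aestronglyMeasurable).2 hu
  -- the averaged error functional G
  set G : ℝ → ℝ := fun s =>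
    (∑ j ∈ Finset.range (k+1), h * |b (s + (j:ℝ) * h)|) + h * f₀ (s + (k:ℝ) * h) with hGdef
  have hGnn : ∀ s, 0 ≤ G s := by
    intro s
    refine add_nonneg (Finset.sum_nonneg fun j _ => ?_) (mul_nonneg hh.le (hf₀nn _))
    positivity
  have hGint : Integrable G := by
    refine Integrable.add (integrable_finset_sum _ fun j _ => ?_)
      ((htrans f₀ hf₀int _).const_mul h)
    exact ((htrans b hbint _).abs).const_mul h
  -- average of G over (0, h) is small
  have havg : (∫ s in (0:ℝ)..h, G s) ≤ h * (ε/4) := by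
    have hGsplit : (∫ s in (0:ℝ)..h, G s) =
        (∑ j ∈ Finset.range (k+1), h * ∫ s in (0:ℝ)..h, |b (s + (j:ℝ)*h)|) +
          h * ∫ s in (0:ℝ)..h, f₀ (s + (k:ℝ)*h) := by
      simp only [hGdef]
      rw [intervalIntegral.integral_add
        (integrable_finset_sum _ fun j _ =>
          ((htrans b hbint _).abs).const_mul h).intervalIntegrable
        ((htrans f₀ hf₀int _).const_mul h).intervalIntegrable]
      rw [intervalIntegral.integral_finset_sum
        (fun j _ => (((htrans b hbint _).abs).const_mul h).intervalIntegrable)]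
      congr 1
      · exact Finset.sum_congr rfl fun j _ => intervalIntegral.integral_const_mul _ _
      · exact intervalIntegral.integral_const_mul _ _
    have hsum_int : ∀ j : ℕ, (∫ s in (0:ℝ)..h, |b (s + (j:ℝ)*h)|) =
        ∫ x in ((fun j : ℕ => (j:ℝ)*h) j)..((fun j : ℕ => (j:ℝ)*h) (j+1)), |b x| := by
      intro j
      rw [intervalIntegral.integral_comp_add_right (fun x => |b x|) ((j:ℝ)*h)]
      congr 1 <;> push_cast <;> ring
    have hsum_b : (∑ j ∈ Finset.range (k+1), ∫ s in (0:ℝ)..h, |b (s + (j:ℝ)*h)|) =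
        ∫ x in (0:ℝ)..T, |b x| := by
      rw [Finset.sum_congr rfl fun j _ => hsum_int j]
      rw [intervalIntegral.sum_integral_adjacent_intervals
        (a := fun j : ℕ => (j:ℝ)*h) (n := k+1) (fun j _ => hbaii _ _)]
      congr 1
      · simp
      · push_cast; linarith [hkh]
    have hlast : (∫ s in (0:ℝ)..h, f₀ (s + (k:ℝ)*h)) = ∫ x in ((k:ℝ)*h)..T, f₀ x := by
      rw [intervalIntegral.integral_comp_add_right f₀ ((k:ℝ)*h)]
      congr 1
      · ring
      · linarith [hkh]
    rw [hGsplit, ← Finset.mul_sum, hsum_b, hlast]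
    have h1 : (∫ x in (0:ℝ)..T, |b x|) ≤ ε/8 := habs 0 T hT.le
    nlinarith [hh.le, hβ]
  -- Markov / Chebyshev on (0, h)
  set Bad : Set ℝ := {s | ε/2 ≤ G s} with hBaddef
  have hmark : volume (Bad ∩ Set.Ioo 0 h) ≤ ENNReal.ofReal (h/2) := by
    set μ' := volume.restrict (Set.Ioo (0:ℝ) h) with hμ'def
    have hGint' : Integrable G μ' := hGint.restrict
    have hmark0 := mul_meas_ge_le_integral_of_nonneg (μ := μ')
      (Eventually.of_forall hGnn) hGint' (ε/2)
    have hint' : (∫ s, G s ∂μ') = ∫ s in (0:ℝ)..h, G s := by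
      rw [intervalIntegral.integral_of_le hh.le, hμ'def, ← integral_Ioc_eq_integral_Ioo]
    rw [hint'] at hmark0
    have hμ'Bad : μ' Bad = volume (Bad ∩ Set.Ioo 0 h) := by
      rw [hμ'def, Measure.restrict_apply' measurableSet_Ioo]
    have hfin : volume (Bad ∩ Set.Ioo 0 h) ≠ ⊤ := by
      refine ne_top_of_le_ne_top ?_ (measure_mono (Set.inter_subset_right))
      simp [Real.volume_Ioo]
    have htR : (volume (Bad ∩ Set.Ioo 0 h)).toReal ≤ h/2 := by
      rw [← hμ'Bad]
      rw [← hBaddef] at hmark0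
      rw [measureReal_def] at hmark0
      nlinarith [hmark0, havg, ENNReal.toReal_nonneg (a := μ' Bad)]
    exact (ENNReal.le_ofReal_iff_toReal_le hfin (by positivity)).2 htR
  -- the bad translated-A set is null
  set BadA : Set ℝ := ⋃ j ∈ Finset.range (k+1), (fun s : ℝ => s + (j:ℝ)*h) ⁻¹' A
    with hBadAdef
  have hBadA : volume BadA = 0 := by
    rw [hBadAdef]
    refine (measure_biUnion_null_iff (Finset.range (k+1)).countable_toSet).2 ?_
    intro j _
    exact (measurePreserving_add_right volume ((j:ℝ)*h)).quasiMeasurePreserving.preimage_null hA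
  -- choose a good shift s
  obtain ⟨s, hsIoo, hsG, hsA⟩ :
      ∃ s ∈ Set.Ioo (0:ℝ) h, ¬ (ε/2 ≤ G s) ∧ s ∉ BadA := by
    by_contra hcon
    push_neg at hcon
    have hsub : Set.Ioo (0:ℝ) h ⊆ (Bad ∩ Set.Ioo 0 h) ∪ BadA := by
      intro s hs
      by_cases hG : ε/2 ≤ G s
      · exact Or.inl ⟨hG, hs⟩
      · exact Or.inr (hcon s hs (not_le.mp hG))
    have hv := le_trans (measure_mono (μ := volume) hsub) (measure_union_le _ _)
    rw [Real.volume_Ioo, hBadA, add_zero] at hv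
    have := hv.trans hmark
    rw [ENNReal.ofReal_le_ofReal_iff (by positivity)] at this
    linarith
  obtain ⟨hs0, hsh⟩ := hsIoo
  have hsG' : G s < ε/2 := not_le.mp hsG
  have hsA' : ∀ j : ℕ, j ≤ k → s + (j:ℝ)*h ∉ A := by
    intro j hj hmem
    have hjmem : j ∈ Finset.range (k+1) := Finset.mem_range.mpr (Nat.lt_succ_of_le hj)
    exact hsA (Set.mem_biUnion hjmem hmem)
  -- basic facts about grid points
  have huT : s + (k:ℝ)*h < T := by rw [hkhT]; linarith
  have hupos : ∀ j : ℕ, (j:ℝ) ≤ (k:ℝ) → 0 < s + (j:ℝ)*h ∧ s + (j:ℝ)*h < T := by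
    intro j hj
    have hj0 : (0:ℝ) ≤ (j:ℝ)*h := mul_nonneg (Nat.cast_nonneg j) hh.le
    have hjk : (j:ℝ)*h ≤ (k:ℝ)*h := mul_le_mul_of_nonneg_right hj hh.le
    constructor
    · linarith
    · linarith
  -- define the partition
  set t : ℕ → ℝ := fun i => if i = 0 then 0 else if i ≤ k+1 then s + ((i:ℝ) - 1)*h else T
    with htdef
  have ht0 : t 0 = 0 := by simp [htdef]
  have htmid : ∀ i : ℕ, 1 ≤ i → i ≤ k+1 → t i = s + ((i:ℝ) - 1)*h := by
    intro i h1 h2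
    simp only [htdef]
    rw [if_neg (by omega : ¬ i = 0), if_pos h2]
  have htmid' : ∀ j : ℕ, j ≤ k → t (j+1) = s + (j:ℝ)*h := by
    intro j hj
    rw [htmid (j+1) (by omega) (by omega)]
    push_cast; ring_nf
  have htop : t (k+2) = T := by
    simp [htdef, (by omega : ¬ (k+2 ≤ k+1))]
  have htin : ∀ i : ℕ, 1 ≤ i → i ≤ k+1 → 0 < t i ∧ t i < T := by
    intro i h1 h2
    obtain ⟨j, rfl⟩ : ∃ j, i = j + 1 := ⟨i - 1, by omega⟩
    rw [htmid' j (by omega)]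
    exact hupos j (by exact_mod_cast Nat.cast_le.2 (by omega))
  refine ⟨k+1, t, ht0, htop, ?_, ?_, ?_, ?_⟩
  · -- strict monotonicity
    intro i hi
    rcases Nat.eq_zero_or_pos i with rfl | hi1
    · rw [ht0, htmid' 0 (by omega)]
      simpa using hs0
    · by_cases hik : i ≤ k
      · obtain ⟨j, rfl⟩ : ∃ j, i = j + 1 := ⟨i - 1, by omega⟩
        rw [htmid' j (by omega), htmid' (j+1) (by omega)]
        push_cast
        nlinarith [hh]
      · have : i = k + 1 := by omega
        subst this
        rw [htmid' k le_rfl, show k+1+1 = k+2 from rfl, htop]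
        exact huT
  · -- points outside A
    intro i h1 h2
    obtain ⟨j, rfl⟩ : ∃ j, i = j + 1 := ⟨i - 1, by omega⟩
    rw [htmid' j (by omega)]
    exact hsA' j (by omega)
  · -- mesh bound
    intro i hi
    rcases Nat.eq_zero_or_pos i with rfl | hi1
    · rw [ht0, htmid' 0 (by omega)]
      simp only [Nat.cast_zero, zero_mul, add_zero, sub_zero]
      linarith
    · by_cases hik : i ≤ k
      · obtain ⟨j, rfl⟩ : ∃ j, i = j + 1 := ⟨i - 1, by omega⟩
        rw [htmid' j (by omega), htmid' (j+1) (by omega)]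
        push_cast
        nlinarith [hh]
      · have : i = k + 1 := by omega
        subst this
        rw [htmid' k le_rfl, show k+1+1 = k+2 from rfl, htop, hkhT]
        linarith
  · -- the Riemann sum estimate
    rw [hI]
    -- rewrite the sum
    have hsum1 : (∑ i ∈ Finset.Icc 1 (k+1), f (t i) * (t (i + 1) - t i)) =
        (∑ j ∈ Finset.range (k+1), h * f₀ (s + (j:ℝ)*h)) - s * f₀ (s + (k:ℝ)*h) := by
      have hIcc : Finset.Icc 1 (k+1) = Finset.Ico 1 (k+2) := by
        rw [← Finset.Ico_add_one_right_eq_Icc]; rfl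
      rw [hIcc, Finset.sum_Ico_eq_sum_range]
      have hterm : ∀ j : ℕ, j < k →
          f (t (1 + j)) * (t (1 + j + 1) - t (1 + j)) = h * f₀ (s + (j:ℝ)*h) := by
        intro j hj
        have e1 : t (1 + j) = s + (j:ℝ)*h := by
          rw [show 1 + j = j + 1 from by omega]; exact htmid' j (by omega)
        have e2 : t (1 + j + 1) = s + ((j:ℝ)+1)*h := by
          rw [show 1 + j + 1 = (j+1) + 1 from by omega, htmid' (j+1) (by omega)]
          push_cast; ring
        have hmem : t (1 + j) ∈ Set.Icc (0:ℝ) T := by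
          have := htin (1+j) (by omega) (by omega)
          exact ⟨this.1.le, this.2.le⟩
        rw [e1, e2, ← e1, ← hf₀eq _ hmem, e1]
        ring
      rw [show k + 2 - 1 = k + 1 from by omega]
      rw [Finset.sum_range_succ, Finset.sum_range_succ]
      rw [Finset.sum_congr rfl fun j hj => hterm j (Finset.mem_range.mp hj)]
      have e1 : t (1 + k) = s + (k:ℝ)*h := by
        rw [show 1 + k = k + 1 from by omega]; exact htmid' k le_rfl
      have e2 : t (1 + k + 1) = T := by
        rw [show 1 + k + 1 = k + 2 from by omega]; exact htop
      have hmem : t (1 + k) ∈ Set.Icc (0:ℝ) T := by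
        have := htin (1+k) (by omega) (by omega)
        exact ⟨this.1.le, this.2.le⟩
      rw [e2, ← hf₀eq _ hmem, e1]
      rw [hkhT]
      ring
    rw [hsum1]
    -- grid points
    set u : ℕ → ℝ := fun j => s + (j:ℝ)*h with hudef
    have hu0 : u 0 = s := by simp [hudef]
    have hujsucc : ∀ j : ℕ, u (j+1) = u j + h := by
      intro j; simp [hudef]; push_cast; ring
    have hukk : u (k+1) = s + T := by
      simp only [hudef]; push_cast; nlinarith [hkh]
    -- block decomposition of the integral ∫_s^{s+T} f₀
    have hadj : (∑ j ∈ Finset.range (k+1), ∫ x in u j..u (j+1), f₀ x) =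
        ∫ x in s..(s+T), f₀ x := by
      rw [intervalIntegral.sum_integral_adjacent_intervals (fun j _ => hf₀ii _ _), hu0, hukk]
    have hadjb : (∑ j ∈ Finset.range (k+1), ∫ x in u j..u (j+1), |b x|) =
        ∫ x in s..(s+T), |b x| := by
      rw [intervalIntegral.sum_integral_adjacent_intervals (fun j _ => hbaii _ _), hu0, hukk]
    -- tail of f₀ vanishes
    have htail : (∫ x in s..(s+T), f₀ x) = (∫ x in (0:ℝ)..T, f₀ x) - ∫ x in (0:ℝ)..s, f₀ x := by
      have z : (∫ x in T..(s+T), f₀ x) = 0 := by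
        rw [intervalIntegral.integral_of_le (by linarith)]
        apply setIntegral_eq_zero_of_forall_eq_zero
        intro x hx
        exact hf₀zero x (fun hmem => absurd hx.1 (not_lt.2 hmem.2))
      have a1 := intervalIntegral.integral_add_adjacent_intervals
        (a := s) (b := T) (c := s+T) (hf₀ii _ _) (hf₀ii _ _)
      have a2 := intervalIntegral.integral_add_adjacent_intervals
        (a := (0:ℝ)) (b := s) (c := T) (hf₀ii _ _) (hf₀ii _ _)
      linarith
    -- α : integral near 0 is small
    have hα : (∫ x in (0:ℝ)..s, f₀ x) ≤ ε/8 := by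
      have hdist : dist s (0:ℝ) < h₀ := by
        rw [Real.dist_eq, sub_zero, abs_of_nonneg hs0.le]; linarith
      have := hPsmall hdist
      rw [Real.dist_eq] at this
      simp only [intervalIntegral.integral_same, sub_zero] at this
      exact (abs_lt.mp this).2.le
    have hαnn : 0 ≤ (∫ x in (0:ℝ)..s, f₀ x) :=
      intervalIntegral.integral_nonneg hs0.le (fun x _ => hf₀nn x)
    -- per-block estimates
    have hblock : ∀ j : ℕ,
        |h * f₀ (u j) - ∫ x in u j..u (j+1), f₀ x| ≤
          h * η + h * |b (u j)| + ∫ x in u j..u (j+1), |b x| := by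
      intro j
      have hu1 : u (j+1) = u j + h := hujsucc j
      have hfgb : ∀ x, f₀ x = g x + b x := fun x => by simp [hbdef]
      have hint_split : (∫ x in u j..u (j+1), f₀ x) =
          (∫ x in u j..u (j+1), g x) + ∫ x in u j..u (j+1), b x := by
        rw [← intervalIntegral.integral_add (gcont.intervalIntegrable _ _) (hbii _ _)]
        exact intervalIntegral.integral_congr fun x _ => hfgb x
      have hgpart : |h * g (u j) - ∫ x in u j..u (j+1), g x| ≤ η * h := by
        rw [hu1]
        have hc : (∫ _x in u j..(u j + h), g (u j)) = h * g (u j) := by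
          rw [intervalIntegral.integral_const, smul_eq_mul]; ring
        rw [← hc, ← intervalIntegral.integral_sub intervalIntegrable_const
          (gcont.intervalIntegrable _ _)]
        have hbound : ∀ x ∈ Set.uIoc (u j) (u j + h), ‖g (u j) - g x‖ ≤ η := by
          intro x hx
          rw [Set.uIoc_of_le (by linarith)] at hx
          have hdx : dist (u j) x < d := by
            rw [Real.dist_eq, abs_of_nonpos (by linarith [hx.1])]
            have h2 := hx.2; have h1 := hx.1
            linarith
          rw [Real.norm_eq_abs, ← Real.dist_eq]
          exact (hgd hdx).le
        have hb := intervalIntegral.norm_integral_le_of_norm_le_const hbound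
        rw [Real.norm_eq_abs] at hb
        calc |∫ x in u j..(u j + h), (g (u j) - g x)| ≤ η * |u j + h - u j| := hb
          _ = η * h := by rw [show u j + h - u j = h by ring, abs_of_nonneg hh.le]
      have hbpart : |∫ x in u j..u (j+1), b x| ≤ ∫ x in u j..u (j+1), |b x| := by
        rw [hu1]
        exact intervalIntegral.abs_integral_le_integral_abs (by linarith)
      have hdecomp : h * f₀ (u j) - (∫ x in u j..u (j+1), f₀ x) =
          (h * g (u j) - ∫ x in u j..u (j+1), g x) +
            (h * b (u j) - ∫ x in u j..u (j+1), b x) := by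
        rw [hint_split, hfgb (u j)]
        ring
      rw [hdecomp]
      calc |(h * g (u j) - ∫ x in u j..u (j+1), g x) +
            (h * b (u j) - ∫ x in u j..u (j+1), b x)|
          ≤ |h * g (u j) - ∫ x in u j..u (j+1), g x| +
            (|h * b (u j)| + |∫ x in u j..u (j+1), b x|) :=
            (abs_add_le _ _).trans (add_le_add le_rfl (abs_sub _ _))
        _ ≤ η * h + (h * |b (u j)| + ∫ x in u j..u (j+1), |b x|) := by
            refine add_le_add hgpart (add_le_add ?_ hbpart)
            rw [abs_mul, abs_of_nonneg hh.le]
        _ = h * η + h * |b (u j)| + ∫ x in u j..u (j+1), |b x| := by ring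
    -- assemble
    have hS : (∑ j ∈ Finset.range (k+1), h * f₀ (s + (j:ℝ)*h)) -
        (∫ x in (0:ℝ)..T, f₀ x) =
        (∑ j ∈ Finset.range (k+1), (h * f₀ (u j) - ∫ x in u j..u (j+1), f₀ x)) -
          ∫ x in (0:ℝ)..s, f₀ x := by
      rw [Finset.sum_sub_distrib, hadj, htail]
      simp only [hudef]
      ring
    have hSsum : |(∑ j ∈ Finset.range (k+1), h * f₀ (s + (j:ℝ)*h)) -
        ∫ x in (0:ℝ)..T, f₀ x| ≤
        (∑ j ∈ Finset.range (k+1), (h * η + h * |b (u j)|)) + (ε/8) + (ε/8) := by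
      rw [hS]
      calc |(∑ j ∈ Finset.range (k+1), (h * f₀ (u j) - ∫ x in u j..u (j+1), f₀ x)) -
            ∫ x in (0:ℝ)..s, f₀ x|
          ≤ |∑ j ∈ Finset.range (k+1), (h * f₀ (u j) - ∫ x in u j..u (j+1), f₀ x)| +
            |∫ x in (0:ℝ)..s, f₀ x| := abs_sub _ _
        _ ≤ (∑ j ∈ Finset.range (k+1), |h * f₀ (u j) - ∫ x in u j..u (j+1), f₀ x|) +
            (ε/8) := by
            gcongr
            · exact Finset.abs_sum_le_sum_abs _ _
            · rw [abs_of_nonneg hαnn]; exact hα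
        _ ≤ (∑ j ∈ Finset.range (k+1),
              (h * η + h * |b (u j)| + ∫ x in u j..u (j+1), |b x|)) + (ε/8) := by
            gcongr with j hj
            exact hblock j
        _ = (∑ j ∈ Finset.range (k+1), (h * η + h * |b (u j)|)) +
              (∫ x in s..(s+T), |b x|) + (ε/8) := by
            rw [← hadjb, ← Finset.sum_add_distrib]
        _ ≤ (∑ j ∈ Finset.range (k+1), (h * η + h * |b (u j)|)) + (ε/8) + (ε/8) := by
            gcongr
            exact habs s (s+T) (by linarith)
    -- final computation
    have hηsum : (∑ j ∈ Finset.range (k+1), (h * η + h * |b (u j)|)) =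
        T * η + ∑ j ∈ Finset.range (k+1), h * |b (u j)| := by
      rw [Finset.sum_add_distrib, Finset.sum_const, Finset.card_range]
      congr 1
      rw [nsmul_eq_mul]
      push_cast
      nlinarith [hkh]
    have hTη : T * η ≤ ε/8 := by
      have he : T * η = (T*ε)/(8*(T+1)) := by rw [hηdef]; ring
      rw [he, div_le_div_iff₀ (by positivity) (by norm_num : (0:ℝ) < 8)]
      nlinarith
    have hGs : (∑ j ∈ Finset.range (k+1), h * |b (u j)|) + h * f₀ (u k) < ε/2 := by
      simpa [hGdef, hudef] using hsG'
    have hfuk : 0 ≤ f₀ (u k) := hf₀nn _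
    have hsf : |s * f₀ (s + (k:ℝ)*h)| ≤ h * f₀ (u k) := by
      rw [abs_of_nonneg (mul_nonneg hs0.le (hf₀nn _))]
      simp only [hudef]
      nlinarith [hf₀nn (s + (k:ℝ)*h)]
    calc |((∑ j ∈ Finset.range (k+1), h * f₀ (s + (j:ℝ)*h)) - s * f₀ (s + (k:ℝ)*h)) -
          ∫ x in (0:ℝ)..T, f₀ x|
        ≤ |(∑ j ∈ Finset.range (k+1), h * f₀ (s + (j:ℝ)*h)) - ∫ x in (0:ℝ)..T, f₀ x| +
          |s * f₀ (s + (k:ℝ)*h)| := by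
          rw [show ((∑ j ∈ Finset.range (k+1), h * f₀ (s + (j:ℝ)*h)) -
            s * f₀ (s + (k:ℝ)*h)) - (∫ x in (0:ℝ)..T, f₀ x) =
            ((∑ j ∈ Finset.range (k+1), h * f₀ (s + (j:ℝ)*h)) -
              (∫ x in (0:ℝ)..T, f₀ x)) - s * f₀ (s + (k:ℝ)*h) by ring]
          exact abs_sub _ _
      _ ≤ ((∑ j ∈ Finset.range (k+1), (h * η + h * |b (u j)|)) + (ε/8) + (ε/8)) +
          (h * f₀ (u k)) := add_le_add hSsum hsf
      _ = T * η + ((∑ j ∈ Finset.range (k+1), h * |b (u j)|) + h * f₀ (u k)) +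
          (ε/8) + (ε/8) := by rw [hηsum]; ring
      _ ≤ ε/8 + (ε/2) + ε/8 + ε/8 :=
          add_le_add (add_le_add (add_le_add hTη hGs.le) le_rfl) le_rfl
      _ ≤ ε := by linarith
end

section
/- Let φ : ℝ₊ → ℝ₊ be a superlinear convex function which vanishes in a neighborhood of 0, and let d ≥ 1. Define Mφ(s) = s^d φ(s^{−d}) for s > 0, let Φ̃ be the lower convex hull of Mφ, and set Φ(z) = Φ̃(z^{−1/d}) z. Then Φ̃(0⁺) = +∞ and consequently Φ is superlinear, i.e. Φ(z)/z → +∞ as z → +∞. -/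
open MeasureTheory Filter Topology Set

/-- The lower convex hull on `(0,∞)` of a function `F`, i.e. the supremum of affine
functions lying below `F` on `(0,∞)`. -/
noncomputable def lowerConvexHullOn (F : ℝ → ℝ) (s : ℝ) : ℝ :=
  sSup {y | ∃ a b : ℝ, (∀ x > 0, a * x + b ≤ F x) ∧ y = a * s + b}

/-- If `φ` is superlinear, convex, vanishes near `0`, then the lower convex hull `Φ̃` of
`Mφ(s) = s^d φ(s^{-d})` tends to `+∞` at `0⁺`, and `Φ(z) = Φ̃(z^{-1/d}) z` is superlinear. -/
theorem lowerConvexHull_mccann_superlinear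
    (d : ℕ) (hd : 1 ≤ d) (φ : ℝ → ℝ) (hφnn : ∀ z, 0 ≤ z → 0 ≤ φ z)
    (hconv : ConvexOn ℝ (Set.Ici 0) φ)
    (h0 : ∃ δ > (0:ℝ), ∀ z ∈ Set.Icc (0:ℝ) δ, φ z = 0)
    (hsuper : Tendsto (fun z => φ z / z) atTop atTop) :
    Tendsto (lowerConvexHullOn (fun s => s ^ d * φ ((s ^ d)⁻¹))) (𝓝[>] 0) atTop ∧
    Tendsto (fun z : ℝ =>
        (lowerConvexHullOn (fun s => s ^ d * φ ((s ^ d)⁻¹)) (z ^ (-(1:ℝ) / d)) * z) / z)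
      atTop atTop := by
  set F : ℝ → ℝ := fun s => s ^ d * φ ((s ^ d)⁻¹) with hF
  have hFnn : ∀ x : ℝ, 0 < x → 0 ≤ F x := by
    intro x hx
    exact mul_nonneg (pow_nonneg hx.le d) (hφnn _ (inv_nonneg.2 (pow_nonneg hx.le d)))
  have key : Tendsto (lowerConvexHullOn F) (𝓝[>] (0:ℝ)) atTop := by
    rw [tendsto_atTop]
    intro M
    set M' : ℝ := max M 0 + 1 with hM'
    have hM'pos : 0 < M' := by positivity
    have hMM' : M ≤ M' - 1 := by simp [hM', le_max_left]
    obtain ⟨z₀, hz₀⟩ := eventually_atTop.1 ((tendsto_atTop.1 hsuper) M')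
    set z₁ : ℝ := max z₀ 1 with hz₁
    have hz₁pos : (0:ℝ) < z₁ := lt_of_lt_of_le one_pos (le_max_right _ _)
    set s₀ : ℝ := min 1 z₁⁻¹ with hs₀
    have hs₀pos : 0 < s₀ := lt_min one_pos (inv_pos.2 hz₁pos)
    -- F is at least M' on (0, s₀]
    have hFlow : ∀ x : ℝ, 0 < x → x ≤ s₀ → M' ≤ F x := by
      intro x hx hxs
      have hxd : 0 < x ^ d := pow_pos hx d
      have hx1 : x ≤ 1 := hxs.trans (min_le_left _ _)
      have hxd_le : x ^ d ≤ z₁⁻¹ := by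
        calc x ^ d ≤ x ^ 1 := pow_le_pow_of_le_one hx.le hx1 hd
        _ = x := pow_one x
        _ ≤ z₁⁻¹ := hxs.trans (min_le_right _ _)
      have hinv : z₁ ≤ (x ^ d)⁻¹ := by
        have h1 : (z₁⁻¹)⁻¹ ≤ (x ^ d)⁻¹ := by gcongr
        rwa [inv_inv] at h1
      have hz : z₀ ≤ (x ^ d)⁻¹ := le_trans (le_max_left _ _) hinv
      have hdiv : M' ≤ φ ((x ^ d)⁻¹) / (x ^ d)⁻¹ := hz₀ _ hz
      have hinvpos : 0 < (x ^ d)⁻¹ := inv_pos.2 hxd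
      rw [le_div_iff₀ hinvpos] at hdiv
      have : x ^ d * (M' * (x ^ d)⁻¹) ≤ x ^ d * φ ((x ^ d)⁻¹) := by
        exact mul_le_mul_of_nonneg_left hdiv hxd.le
      calc M' = x ^ d * (M' * (x ^ d)⁻¹) := by field_simp
      _ ≤ F x := this
    -- the affine minorant
    set a : ℝ := -M' / s₀ with ha
    have haff : ∀ x > (0:ℝ), a * x + M' ≤ F x := by
      intro x hx
      rcases le_or_gt x s₀ with hxs | hxs
      · have h1 : a * x ≤ 0 := by
          apply mul_nonpos_of_nonpos_of_nonneg _ hx.le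
          exact div_nonpos_of_nonpos_of_nonneg (by linarith) hs₀pos.le
        linarith [hFlow x hx hxs]
      · have h1 : a * x + M' ≤ 0 := by
          rw [ha, div_mul_eq_mul_div, div_add' _ _ _ hs₀pos.ne']
          exact div_nonpos_of_nonpos_of_nonneg (by nlinarith) hs₀pos.le
        linarith [hFnn x hx]
    -- conclude eventually
    have hε : (0:ℝ) < s₀ / M' := by positivity
    filter_upwards [Ioo_mem_nhdsGT_of_mem (show (0:ℝ) ∈ Ico (0:ℝ) (s₀ / M') from ⟨le_refl _, hε⟩)]
      with s hs
    obtain ⟨hs0, hsε⟩ := hs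
    have hbdd : BddAbove {y | ∃ a b : ℝ, (∀ x > 0, a * x + b ≤ F x) ∧ y = a * s + b} := by
      refine ⟨F s, ?_⟩
      rintro y ⟨a', b', h', rfl⟩
      exact h' s hs0
    have hmem : a * s + M' ∈ {y | ∃ a b : ℝ, (∀ x > 0, a * x + b ≤ F x) ∧ y = a * s + b} :=
      ⟨a, M', haff, rfl⟩
    have hle : a * s + M' ≤ lowerConvexHullOn F s := le_csSup hbdd hmem
    have has : -1 ≤ a * s := by
      have hms : s * M' < s₀ := (lt_div_iff₀ hM'pos).1 hsε
      rw [ha, neg_div, neg_mul, neg_le_neg_iff, div_mul_eq_mul_div, div_le_one hs₀pos]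
      nlinarith
    linarith
  refine ⟨key, ?_⟩
  have h2 : Tendsto (fun z : ℝ => z ^ (-(1:ℝ)/d)) atTop (𝓝[>] (0:ℝ)) := by
    apply tendsto_nhdsWithin_of_tendsto_nhds_of_eventually_within
    · have hdr : (0:ℝ) < (1:ℝ)/d := by
        have : (1:ℝ) ≤ (d:ℝ) := by exact_mod_cast hd
        positivity
      have heq : -(1:ℝ)/d = -((1:ℝ)/d) := by ring
      rw [heq]
      exact tendsto_rpow_neg_atTop hdr
    · filter_upwards [eventually_gt_atTop (0:ℝ)] with z hz
      exact Real.rpow_pos_of_pos hz _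
  have h3 := key.comp h2
  apply h3.congr'
  filter_upwards [eventually_gt_atTop (0:ℝ)] with z hz
  simp only [Function.comp]
  rw [mul_div_assoc, div_self hz.ne', mul_one]
end
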